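/- arXiv:2302.04938 — 3 statements merged into one kernel-verified Lean document; each statement's English description precedes it below -/
import Mathlib

section
/- For a swap market with concave forward exchange functions f₁, f₂ having f₁(0) = f₂(0) = 0, the zero trade is optimal for the arbitrage problem with prices ν₁, ν₂ > 0 if and only if f₁′(0) ≤ ν₁/ν₂ ≤ 1/f₂′(0) (interpreting 1/f₂′(0) = ∞ when f₂′(0) = 0). -/
/-!
Selling `δ ≥ 0` of the first asset yields at most `f₁ δ` of the second, so on trades with
`Δ₁ ≤ 0` the value `ν₁ Δ₁ + ν₂ Δ₂` is nonpositive exactly when `ν₂ f₁ δ ≤ ν₁ δ` for all `δ ≥ 0`.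
For a concave `f₁` with `f₁ 0 = 0` the smallest such linear bound is its tangent at `0`, so this
is `ν₂ f₁′(0) ≤ ν₁`. The trades with `Δ₂ ≤ 0` are handled symmetrically, and no trade in `T`
has both coordinates positive. Closedness of `T` is what makes the sections of `T` bounded, so
that `f₁` really dominates them.
-/

open Filter Topology Set

theorem Convex.bddAbove_setOf_add_smul_mem {E : Type*} [AddCommGroup E] [Module ℝ E]
    [TopologicalSpace E] [IsTopologicalAddGroup E] [ContinuousSMul ℝ E] {T : Set E}
    (hT : Convex ℝ T) (hTc : IsClosed T) (h0 : (0 : E) ∈ T) {v : E} (hv : v ∉ T) (x : E) :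
    BddAbove {t : ℝ | x + t • v ∈ T} := by
  by_contra hunb
  have hfreq : ∃ᶠ t : ℝ in atTop, x + t • v ∈ T := by
    refine frequently_atTop.2 fun a => ?_
    obtain ⟨t, ht, hat⟩ := not_bddAbove_iff.1 hunb a
    exact ⟨t, hat.le, ht⟩
  -- shrinking `x + t • v` towards `0 ∈ T` by the factor `t⁻¹` gives `t⁻¹ • x + v ∈ T`
  refine hv (hTc.mem_of_frequently_of_tendsto (f := fun t : ℝ => t⁻¹ • x + v)
    (b := atTop) ?_ ?_)
  · refine (hfreq.and_eventually (eventually_ge_atTop 1)).mono fun t ⟨ht, ht1⟩ => ?_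
    have := hT.smul_mem_of_zero_mem h0 ht ⟨inv_nonneg.2 (by linarith), inv_le_one_of_one_le₀ ht1⟩
    rwa [smul_add, smul_smul, inv_mul_cancel₀ (by linarith), one_smul] at this
  · simpa using ((tendsto_inv_atTop_zero (𝕜 := ℝ)).smul_const x).add_const v

theorem ConcaveOn.forall_le_mul_iff_le {f : ℝ → ℝ} {c d : ℝ} (hf : ConcaveOn ℝ (Ici 0) f)
    (hf0 : f 0 = 0) (hd : HasDerivWithinAt f d (Ici 0) 0) :
    (∀ t, 0 ≤ t → f t ≤ c * t) ↔ d ≤ c := by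
  constructor
  · intro H
    have hslope := (hasDerivWithinAt_iff_tendsto_slope' (s := Ioi 0) (lt_irrefl 0)).1 hd.Ioi_of_Ici
    refine le_of_tendsto hslope (eventually_nhdsWithin_of_forall fun t (ht : 0 < t) => ?_)
    rw [slope_def_field, hf0, sub_zero, sub_zero, div_le_iff₀ ht]
    linarith [H t ht.le]
  · intro hdc t ht
    rcases ht.eq_or_lt with rfl | ht
    · simp [hf0]
    have hslope := hf.slope_le_of_hasDerivWithinAt_Ioi self_mem_Ici ht.le ht hd.Ioi_of_Ici
    rw [slope_def_field, hf0, sub_zero, sub_zero, div_le_iff₀ ht] at hslope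
    exact hslope.trans (mul_le_mul_of_nonneg_right hdc ht.le)

theorem forall_mem_mul_add_mul_nonpos_iff {T : Set (ℝ × ℝ)} {ν₁ ν₂ : ℝ}
    (hnofree : ∀ Δ ∈ T, 0 ≤ Δ.1 → 0 ≤ Δ.2 → Δ = (0, 0)) :
    (∀ Δ ∈ T, ν₁ * Δ.1 + ν₂ * Δ.2 ≤ 0) ↔
      (∀ a b, (a, b) ∈ T → a ≤ 0 → ν₁ * a + ν₂ * b ≤ 0) ∧
        (∀ a b, (a, b) ∈ T → b ≤ 0 → ν₁ * a + ν₂ * b ≤ 0) := by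
  refine ⟨fun H => ⟨fun a b hab _ => H _ hab, fun a b hab _ => H _ hab⟩, ?_⟩
  rintro ⟨H₁, H₂⟩ ⟨a, b⟩ hab
  rcases le_or_gt a 0 with ha | ha
  · exact H₁ a b hab ha
  rcases le_or_gt b 0 with hb | hb
  · exact H₂ a b hab hb
  exact absurd (Prod.mk.inj (hnofree _ hab ha.le hb.le)).1 ha.ne'

theorem forall_mem_fst_nonpos_mul_add_mul_nonpos_iff {T : Set (ℝ × ℝ)} {f : ℝ → ℝ}
    {ν₁ ν₂ d : ℝ} (hT : Convex ℝ T) (hTc : IsClosed T) (h0 : (0, 0) ∈ T)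
    (h₀₁ : ((0 : ℝ), (1 : ℝ)) ∉ T) (hf : ∀ δ ≥ (0 : ℝ), f δ = sSup {l : ℝ | (-δ, l) ∈ T})
    (hf0 : f 0 = 0) (hc : ConcaveOn ℝ (Ici 0) f) (hd : HasDerivWithinAt f d (Ici 0) 0)
    (hν₁ : 0 ≤ ν₁) (hν₂ : 0 < ν₂) :
    (∀ a b, (a, b) ∈ T → a ≤ 0 → ν₁ * a + ν₂ * b ≤ 0) ↔ ν₂ * d ≤ ν₁ := by
  rw [← (hc.smul hν₂.le).forall_le_mul_iff_le (by simp [hf0]) (hd.const_mul ν₂)]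
  constructor
  · intro H δ hδ
    rw [smul_eq_mul, hf δ hδ, ← le_div_iff₀' hν₂]
    refine Real.sSup_le (fun l hl => ?_) (by positivity)
    rw [le_div_iff₀' hν₂]
    linarith [H _ _ hl (neg_nonpos.2 hδ)]
  · intro H a b hab ha
    have hbdd : BddAbove {l : ℝ | (-(-a), l) ∈ T} := by
      simpa using hT.bddAbove_setOf_add_smul_mem hTc h0 h₀₁ (a, 0)
    have hb : b ≤ f (-a) := by
      rw [hf _ (neg_nonneg.2 ha)]
      exact le_csSup hbdd (by simpa using hab)
    have := H (-a) (neg_nonneg.2 ha)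
    rw [smul_eq_mul] at this
    linarith [mul_le_mul_of_nonneg_left hb hν₂.le]

theorem no_trade_condition_general (T : Set (ℝ × ℝ)) (hT : Convex ℝ T) (hTc : IsClosed T)
    (h0 : (0, 0) ∈ T)
    (hnofree : ∀ Δ ∈ T, 0 ≤ Δ.1 → 0 ≤ Δ.2 → Δ = (0, 0))
    (f₁ f₂ : ℝ → ℝ) (ν₁ ν₂ d₁ d₂ : ℝ)
    (hf₁ : ∀ δ ≥ (0 : ℝ), f₁ δ = sSup {l : ℝ | (-δ, l) ∈ T})
    (hf₂ : ∀ δ ≥ (0 : ℝ), f₂ δ = sSup {l : ℝ | (l, -δ) ∈ T})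
    (hf₁0 : f₁ 0 = 0) (hf₂0 : f₂ 0 = 0)
    (hc₁ : ConcaveOn ℝ (Set.Ici 0) f₁) (hc₂ : ConcaveOn ℝ (Set.Ici 0) f₂)
    (hd₁ : HasDerivWithinAt f₁ d₁ (Set.Ici 0) 0)
    (hd₂ : HasDerivWithinAt f₂ d₂ (Set.Ici 0) 0)
    (hν₁ : 0 < ν₁) (hν₂ : 0 < ν₂) :
    (∀ Δ ∈ T, ν₁ * Δ.1 + ν₂ * Δ.2 ≤ 0) ↔ (ν₂ * d₁ ≤ ν₁ ∧ ν₁ * d₂ ≤ ν₂) := by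
  have h₀₁ : ((0 : ℝ), (1 : ℝ)) ∉ T := fun h => by simpa using hnofree _ h le_rfl zero_le_one
  have h₁₀ : ((1 : ℝ), (0 : ℝ)) ∉ T := fun h => by simpa using hnofree _ h zero_le_one le_rfl
  have hswap := forall_mem_fst_nonpos_mul_add_mul_nonpos_iff (T := Prod.swap ⁻¹' T)
    (hT.linear_preimage (LinearEquiv.prodComm ℝ ℝ ℝ).toLinearMap)
    (hTc.preimage continuous_swap) h0 h₁₀ hf₂ hf₂0 hc₂ hd₂ hν₂.le hν₁
  rw [forall_mem_mul_add_mul_nonpos_iff hnofree,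
    forall_mem_fst_nonpos_mul_add_mul_nonpos_iff hT hTc h0 h₀₁ hf₁ hf₁0 hc₁ hd₁ hν₁.le hν₂,
    ← hswap, forall_comm]
  simp only [mem_preimage, Prod.swap_prod_mk, add_comm]

/-- No-trade condition: for a swap market, the zero trade is optimal for prices
ν₁, ν₂ > 0 if and only if f₁′(0) ≤ ν₁/ν₂ ≤ 1/f₂′(0) (with 1/f₂′(0) = ∞ when
f₂′(0) = 0; the condition is written multiplicatively to encode this convention). -/
theorem no_trade_condition (T : Set (ℝ × ℝ)) (hT : Convex ℝ T) (hTc : IsClosed T)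
    (h0 : (0, 0) ∈ T)
    (hnofree : ∀ Δ ∈ T, 0 ≤ Δ.1 → 0 ≤ Δ.2 → Δ = (0, 0))
    (f₁ f₂ : ℝ → ℝ) (ν₁ ν₂ d₁ d₂ : ℝ)
    (hf₁ : ∀ δ ≥ (0 : ℝ), f₁ δ = sSup {l : ℝ | (-δ, l) ∈ T})
    (hf₂ : ∀ δ ≥ (0 : ℝ), f₂ δ = sSup {l : ℝ | (l, -δ) ∈ T})
    (hf₁0 : f₁ 0 = 0) (hf₂0 : f₂ 0 = 0)
    (hc₁ : ConcaveOn ℝ (Set.Ici 0) f₁) (hc₂ : ConcaveOn ℝ (Set.Ici 0) f₂)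
    (hd₁ : HasDerivWithinAt f₁ d₁ (Set.Ici 0) 0)
    (hd₂ : HasDerivWithinAt f₂ d₂ (Set.Ici 0) 0)
    (hd₁0 : 0 ≤ d₁) (hd₂0 : 0 ≤ d₂)
    (hν₁ : 0 < ν₁) (hν₂ : 0 < ν₂) :
    (∀ Δ ∈ T, ν₁ * Δ.1 + ν₂ * Δ.2 ≤ 0) ↔ (ν₂ * d₁ ≤ ν₁ ∧ ν₁ * d₂ ≤ ν₂) :=
  no_trade_condition_general T hT hTc h0 hnofree f₁ f₂ ν₁ ν₂ d₁ d₂ hf₁ hf₂ hf₁0 hf₂0 hc₁ hc₂ hd₁ hd₂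
    hν₁ hν₂
end

section
/- Let f₁: ℝ₊ → ℝ be concave with bounded liquidity, δ₁⁻ = inf{δ ≥ 0 | f₁(δ) = sup f₁}, and let f₁⁻(δ₁⁻) = lim_{h→0⁺}(f₁(δ₁⁻) − f₁(δ₁⁻ − h))/h be the left derivative at δ₁⁻. If f₁⁻(δ₁⁻) ≥ ν₁/ν₂ with ν₁, ν₂ > 0, then δ₁⁻ is a maximizer of −ν₁δ + ν₂f₁(δ) over δ ≥ 0. -/
/-!
Continuity makes the set of maximizers of `f₁` closed, so `δ₁⁻` is itself a maximizer. Trading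
beyond `δ₁⁻` then only costs `ν₁` per unit without raising `f₁`. Trading less than `δ₁⁻` loses at
least `ν₂ (f₁ δ₁⁻ - f₁ δ)`, and by concavity the secant slope of `f₁` on `[δ, δ₁⁻]` is at least the
left derivative at `δ₁⁻`, hence at least `ν₁ / ν₂`.
-/

open Set

lemma csInf_mem_setOf_mem_and_eq {α β : Type*} [ConditionallyCompleteLinearOrder α]
    [TopologicalSpace α] [OrderTopology α] [TopologicalSpace β] [T1Space β]
    {f : α → β} {s : Set α} {c : β} (hs : IsClosed s) (hbdd : BddBelow s)
    (hf : ContinuousOn f s) (hc : ∃ x ∈ s, f x = c) :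
    sInf {x | x ∈ s ∧ f x = c} ∈ {x | x ∈ s ∧ f x = c} :=
  (hf.preimage_isClosed_of_isClosed hs isClosed_singleton).csInf_mem hc
    (hbdd.mono inter_subset_left)

lemma neg_mul_add_mul_le_of_div_le_slope {f : ℝ → ℝ} {ν₁ ν₂ x y : ℝ} (hν₂ : 0 < ν₂)
    (hxy : x < y) (h : ν₁ / ν₂ ≤ slope f x y) :
    -ν₁ * x + ν₂ * f x ≤ -ν₁ * y + ν₂ * f y := by
  rw [slope_def_field, div_le_div_iff₀ hν₂ (sub_pos.2 hxy)] at h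
  linarith

/-- Bounded liquidity: if the minimum supported price (the left derivative of f₁ at
δ₁⁻ = inf{δ ≥ 0 | f₁(δ) = sup f₁}) is at least ν₁/ν₂, then δ₁⁻ maximizes
−ν₁δ + ν₂ f₁(δ) over δ ≥ 0. -/
theorem bounded_liquidity_full_trade_optimal (f₁ : ℝ → ℝ) (ν₁ ν₂ δm d : ℝ)
    (hconc : ConcaveOn ℝ (Set.Ici 0) f₁)
    (hcont : ContinuousOn f₁ (Set.Ici 0))
    (hbdd : BddAbove (f₁ '' Set.Ici 0))
    (hattain : ∃ δ ≥ (0 : ℝ), f₁ δ = sSup (f₁ '' Set.Ici 0))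
    (hδm : δm = sInf {δ : ℝ | 0 ≤ δ ∧ f₁ δ = sSup (f₁ '' Set.Ici 0)})
    (hd : HasDerivWithinAt f₁ d (Set.Iic δm ∩ Set.Ici 0) δm)
    (hν₁ : 0 < ν₁) (hν₂ : 0 < ν₂)
    (hcond : ν₁ / ν₂ ≤ d) :
    ∀ δ ≥ (0 : ℝ), -ν₁ * δ + ν₂ * f₁ δ ≤ -ν₁ * δm + ν₂ * f₁ δm := by
  obtain ⟨hδm₀, hmax⟩ : 0 ≤ δm ∧ f₁ δm = sSup (f₁ '' Ici 0) :=
    hδm ▸ csInf_mem_setOf_mem_and_eq isClosed_Ici ⟨0, fun _ h ↦ h⟩ hcont hattain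
  intro δ hδ
  rcases le_or_gt δm δ with hle | hlt
  · have : f₁ δ ≤ f₁ δm := hmax ▸ le_csSup hbdd (mem_image_of_mem f₁ hδ)
    nlinarith
  · rw [Iic_inter_Ici] at hd
    have hslope : d ≤ slope f₁ δ δm :=
      (hconc.subset Icc_subset_Ici_self (convex_Icc 0 δm)).le_slope_of_hasDerivWithinAt
        ⟨hδ, hlt.le⟩ ⟨hδm₀, le_rfl⟩ hlt hd
    exact neg_mul_add_mul_le_of_div_le_slope hν₂ hlt (hcond.trans hslope)
end

section
/- For the weighted geometric mean CFMM with parameter w ∈ (0,1), η = w/(1−w), fee γ, reserves R₁, R₂ > 0, and prices ν₁, ν₂ > 0, the point δ₁⋆ = max{δ₁, 0} with δ₁ = (R₁/γ)((ηγ(ν₂/ν₁)(R₂/R₁))^{1/(η+1)} − 1) maximizes −ν₁δ + ν₂f₁(δ) over δ ≥ 0, where f₁(δ) = R₂(1 − (1 + γδ/R₁)^{−η}). -/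
/-!
In the variable `u = 1 + γ δ / R₁ ≥ 1` the arbitrage objective is an increasing affine function
of `-(η u + A u ^ (-η))`, where `A = η γ (ν₂ / ν₁) (R₂ / R₁)`. This function is convex with
stationary point `u = A ^ (1 / (η + 1))`, so its minimum over `u ≥ 1` sits at the stationary point
if that exceeds `1`, and at the boundary `u = 1` otherwise. Both cases reduce to the Bernoulli
inequality `1 - η (t - 1) ≤ t ^ (-η)`.
-/

open Set

namespace Real

theorem one_sub_mul_sub_one_le_rpow_neg {η t : ℝ} (hη : 0 ≤ η) (ht : 0 < t) :
    1 - η * (t - 1) ≤ t ^ (-η) := by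
  have hlog : η * log t ≤ η * (t - 1) := mul_le_mul_of_nonneg_left (log_le_sub_one_of_pos ht) hη
  calc 1 - η * (t - 1) ≤ -η * log t + 1 := by linarith
    _ ≤ exp (-η * log t) := add_one_le_exp _
    _ = t ^ (-η) := by rw [rpow_def_of_pos ht, mul_comm]

theorem mul_add_le_mul_add_rpow_neg_of_le_one {η A u : ℝ} (hη : 0 ≤ η) (hA : 0 ≤ A)
    (hA1 : A ≤ 1) (hu : 1 ≤ u) : η + A ≤ η * u + A * u ^ (-η) := by
  have hbern := one_sub_mul_sub_one_le_rpow_neg hη (by linarith : (0 : ℝ) < u)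
  have hgain : 0 ≤ η * (u - 1) := mul_nonneg hη (by linarith)
  nlinarith [mul_le_mul_of_nonneg_left hbern hA]

theorem mul_add_one_le_mul_add_rpow_add_one_mul_rpow_neg {η B u : ℝ} (hη : 0 ≤ η) (hB : 0 < B)
    (hu : 0 < u) : (η + 1) * B ≤ η * u + B ^ (η + 1) * u ^ (-η) := by
  -- Bernoulli at `t = u / B`, scaled by `B`.
  have hscale : B ^ (η + 1) * u ^ (-η) = B * (u / B) ^ (-η) := by
    rw [div_rpow hu.le hB.le, rpow_neg hB.le, rpow_add hB, rpow_one]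
    field_simp
  have hbern := one_sub_mul_sub_one_le_rpow_neg hη (div_pos hu hB)
  have hdiv : B * (u / B - 1) = u - B := by field_simp
  rw [hscale]
  nlinarith [mul_le_mul_of_nonneg_left hbern hB.le]

theorem isMinOn_mul_add_rpow_neg {η A : ℝ} (hη : 0 ≤ η) (hA : 0 ≤ A) :
    IsMinOn (fun u ↦ η * u + A * u ^ (-η)) (Ici 1) (max (A ^ (1 / (η + 1))) 1) := by
  refine isMinOn_iff.2 fun u (hu : 1 ≤ u) ↦ ?_
  set B := A ^ (1 / (η + 1))
  have hBA : B ^ (η + 1) = A := by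
    rw [← rpow_mul hA, one_div_mul_cancel (by linarith), rpow_one]
  rcases le_or_gt B 1 with hB1 | hB1
  · have hA1 : A ≤ 1 := hBA ▸ rpow_le_one (rpow_nonneg hA _) hB1 (by linarith)
    simpa [max_eq_right hB1] using mul_add_le_mul_add_rpow_neg_of_le_one hη hA hA1 hu
  · have hmin := mul_add_one_le_mul_add_rpow_add_one_mul_rpow_neg (u := u) hη
      (by linarith : 0 < B) (by linarith)
    have hstat : η * B + B ^ (η + 1) * B ^ (-η) = (η + 1) * B := by
      rw [← rpow_add (by linarith), add_neg_cancel_comm, rpow_one]; ring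
    rw [max_eq_left hB1.le, ← hBA]
    linarith

end Real

theorem geom_mean_arbitrage_closed_form_general (w γ R₁ R₂ ν₁ ν₂ η : ℝ)
    (hw : 0 < w) (hw1 : w < 1) (hγ : 0 < γ)
    (hR₁ : 0 < R₁) (hR₂ : 0 < R₂) (hν₁ : 0 < ν₁) (hν₂ : 0 < ν₂)
    (hη : η = w / (1 - w))
    (f₁ : ℝ → ℝ) (hf₁ : ∀ δ, f₁ δ = R₂ * (1 - (1 + γ * δ / R₁) ^ (-η)))
    (δ₁ δstar : ℝ)
    (hδ₁ : δ₁ = R₁ / γ * ((η * γ * (ν₂ / ν₁) * (R₂ / R₁)) ^ (1 / (η + 1)) - 1))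
    (hδstar : δstar = max δ₁ 0) :
    ∀ δ ≥ (0 : ℝ), -ν₁ * δ + ν₂ * f₁ δ ≤ -ν₁ * δstar + ν₂ * f₁ δstar := by
  intro δ hδ
  have hη0 : 0 < η := hη ▸ div_pos hw (sub_pos.2 hw1)
  set A := η * γ * (ν₂ / ν₁) * (R₂ / R₁) with hA
  have hobj : ∀ x, -ν₁ * x + ν₂ * f₁ x = ν₂ * R₂ + ν₁ * R₁ / γ -
      ν₁ * R₁ / (γ * η) * (η * (1 + γ * x / R₁) + A * (1 + γ * x / R₁) ^ (-η)) := by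
    intro x
    rw [hf₁, hA]
    field_simp
    ring
  have hstar : 1 + γ * δstar / R₁ = max (A ^ (1 / (η + 1))) 1 := by
    rw [hδstar, mul_max_of_nonneg _ _ hγ.le, ← max_div_div_right hR₁.le, ← max_add_add_left, hδ₁]
    congr 1
    · field_simp
      ring
    · simp
  have hu : 1 + γ * δ / R₁ ∈ Ici 1 := le_add_of_nonneg_right (by positivity : 0 ≤ γ * δ / R₁)
  have hmin := Real.isMinOn_mul_add_rpow_neg hη0.le (by positivity : 0 ≤ A) hu
  rw [hobj, hobj, hstar]
  exact sub_le_sub_left (mul_le_mul_of_nonneg_left hmin (by positivity)) _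

/-- Closed-form arbitrage for the geometric mean CFMM: δ₁⋆ = max{δ₁, 0} with
δ₁ = (R₁/γ)((ηγ(ν₂/ν₁)(R₂/R₁))^(1/(η+1)) − 1) maximizes −ν₁δ + ν₂ f₁(δ) over δ ≥ 0. -/
theorem geom_mean_arbitrage_closed_form (w γ R₁ R₂ ν₁ ν₂ η : ℝ)
    (hw : 0 < w) (hw1 : w < 1) (hγ : 0 < γ) (hγ1 : γ ≤ 1)
    (hR₁ : 0 < R₁) (hR₂ : 0 < R₂) (hν₁ : 0 < ν₁) (hν₂ : 0 < ν₂)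
    (hη : η = w / (1 - w))
    (f₁ : ℝ → ℝ) (hf₁ : ∀ δ, f₁ δ = R₂ * (1 - (1 + γ * δ / R₁) ^ (-η)))
    (δ₁ δstar : ℝ)
    (hδ₁ : δ₁ = R₁ / γ * ((η * γ * (ν₂ / ν₁) * (R₂ / R₁)) ^ (1 / (η + 1)) - 1))
    (hδstar : δstar = max δ₁ 0) :
    ∀ δ ≥ (0 : ℝ), -ν₁ * δ + ν₂ * f₁ δ ≤ -ν₁ * δstar + ν₂ * f₁ δstar :=
  geom_mean_arbitrage_closed_form_general w γ R₁ R₂ ν₁ ν₂ η hw hw1 hγ hR₁ hR₂ hν₁ hν₂ hη f₁ hf₁ δ₁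
    δstar hδ₁ hδstar
end
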